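/- arXiv:2208.12559 — 3 statements merged into one kernel-verified Lean document; each statement's English description precedes it below -/
import Mathlib

section
/- Let k, σ > 0, μ = √(4kσ)/(2k), and u(x) = (sinh(μ(x−1)) − sinh(μx))/sinh(μ) + 1. Then 0 ≤ u(x) ≤ 1 for all x ∈ [0,1]. -/
open Real

theorem reaction_diffusion_bounds (k σ : ℝ) (hk : 0 < k) (hσ : 0 < σ)
    (μ : ℝ) (hμ : μ = Real.sqrt (4*k*σ)/(2*k))
    (u : ℝ → ℝ)
    (hu : ∀ x, u x = (Real.sinh (μ * (x-1)) - Real.sinh (μ * x)) / Real.sinh μ + 1) :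
    ∀ x ∈ Set.Icc (0:ℝ) 1, 0 ≤ u x ∧ u x ≤ 1 := by
  have hμpos : 0 < μ := by
    rw [hμ]
    positivity
  have hs : 0 < Real.sinh μ := Real.sinh_pos_iff.mpr hμpos
  intro x hx
  obtain ⟨hx0, hx1⟩ := hx
  rw [hu]
  constructor
  · -- lower bound: sinh(μx) - sinh(μ(x-1)) ≤ sinh μ
    have key : Real.sinh (μ*x) - Real.sinh (μ*(x-1)) ≤ Real.sinh μ := by
      have e1 : Real.sinh (μ*x) - Real.sinh (μ*(x-1))
          = 2 * Real.cosh (μ*(2*x-1)/2) * Real.sinh (μ/2) := by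
        have h1 : μ*x = μ*(2*x-1)/2 + μ/2 := by ring
        have h2 : μ*(x-1) = μ*(2*x-1)/2 - μ/2 := by ring
        rw [h1, h2, Real.sinh_add, Real.sinh_sub]
        ring
      have e2 : Real.sinh μ = 2 * Real.cosh (μ/2) * Real.sinh (μ/2) := by
        have : μ = μ/2 + μ/2 := by ring
        rw [this, Real.sinh_add]
        ring
      rw [e1, e2]
      have hc : Real.cosh (μ*(2*x-1)/2) ≤ Real.cosh (μ/2) := by
        rw [Real.cosh_le_cosh]
        rw [abs_le]
        constructor
        · rw [abs_of_pos (by positivity)]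
          nlinarith
        · rw [abs_of_pos (by positivity)]
          nlinarith
      have hsh : 0 ≤ Real.sinh (μ/2) := (Real.sinh_pos_iff.mpr (by linarith)).le
      nlinarith
    have : -1 ≤ (Real.sinh (μ * (x-1)) - Real.sinh (μ * x)) / Real.sinh μ := by
      rw [le_div_iff₀ hs]
      nlinarith
    linarith
  · have hle : Real.sinh (μ*(x-1)) ≤ Real.sinh (μ*x) := by
      rw [Real.sinh_le_sinh]
      nlinarith
    have : (Real.sinh (μ * (x-1)) - Real.sinh (μ * x)) / Real.sinh μ ≤ 0 :=
      div_nonpos_of_nonpos_of_nonneg (by linarith) hs.le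
    linarith
end

section
/- For μ > 0 define u_μ(x) = (sinh(μ(x−1)) − sinh(μx))/sinh(μ) + 1. Then for every x ∈ (0,1), 1 − u_μ(x) ≤ e^{−μx} + e^{−μ(1−x)}. -/
open Real

lemma sinh_div_sinh_le (a b : ℝ) (ha : 0 ≤ a) (hab : a ≤ b) (hb : 0 < b) :
    Real.sinh a / Real.sinh b ≤ Real.exp (a - b) := by
  have hsb : 0 < Real.sinh b := Real.sinh_pos_iff.2 hb
  rw [div_le_iff₀ hsb, Real.sinh_eq, Real.sinh_eq]
  have h1 : Real.exp (a - b) ≤ Real.exp (b - a) := Real.exp_le_exp.2 (by linarith)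
  have f1 : Real.exp (a - b) * Real.exp b = Real.exp a := by
    rw [← Real.exp_add]; ring_nf
  have f2 : Real.exp (a - b) * Real.exp (-b) = Real.exp (a - 2*b) := by
    rw [← Real.exp_add]; ring_nf
  have f3 : Real.exp (a - 2*b) ≤ Real.exp (-a) := Real.exp_le_exp.2 (by linarith)
  nlinarith

theorem boundary_layer_thinness (μ : ℝ) (hμ : 0 < μ)
    (u : ℝ → ℝ)
    (hu : ∀ x, u x = (Real.sinh (μ * (x-1)) - Real.sinh (μ * x)) / Real.sinh μ + 1) :
    ∀ x ∈ Set.Ioo (0:ℝ) 1,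
      1 - u x ≤ Real.exp (-μ*x) + Real.exp (-μ*(1-x)) := by
  intro x hx
  obtain ⟨hx0, hx1⟩ := hx
  rw [hu x]
  have hsμ : 0 < Real.sinh μ := Real.sinh_pos_iff.2 hμ
  have key1 : Real.sinh (μ * x) / Real.sinh μ ≤ Real.exp (μ * x - μ) :=
    sinh_div_sinh_le _ _ (by positivity) (by nlinarith) hμ
  have key2 : Real.sinh (μ * (1 - x)) / Real.sinh μ ≤ Real.exp (μ * (1 - x) - μ) :=
    sinh_div_sinh_le _ _ (by nlinarith) (by nlinarith) hμ
  have hodd : Real.sinh (μ * (x - 1)) = - Real.sinh (μ * (1 - x)) := by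
    rw [← Real.sinh_neg]; ring_nf
  have : 1 - ((Real.sinh (μ * (x-1)) - Real.sinh (μ * x)) / Real.sinh μ + 1)
      = Real.sinh (μ * x) / Real.sinh μ + Real.sinh (μ * (1 - x)) / Real.sinh μ := by
    rw [hodd]; ring
  rw [this]
  have he1 : Real.exp (μ * x - μ) = Real.exp (-μ * (1 - x)) := by ring_nf
  have he2 : Real.exp (μ * (1 - x) - μ) = Real.exp (-μ * x) := by ring_nf
  rw [he1] at key1
  rw [he2] at key2
  linarith
end

section
/- Let μ > 0 and u_μ(x) = 1 − cosh(μ(x−1/2))/cosh(μ/2). For fixed x ∈ [0,1], the map μ ↦ u_μ(x) is monotone nondecreasing in μ on (0, ∞). -/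
open Real

theorem reaction_diffusion_monotone_in_mu (x : ℝ) (hx : x ∈ Set.Icc (0:ℝ) 1) :
    MonotoneOn (fun μ : ℝ => 1 - Real.cosh (μ * (x - 1/2)) / Real.cosh (μ/2))
      (Set.Ioi (0:ℝ)) := by
  obtain ⟨hx0, hx1⟩ := hx
  intro a ha b hb hab
  simp only [Set.mem_Ioi] at ha hb
  simp only
  have ht0 : (0:ℝ) ≤ |x - 1/2| := abs_nonneg _
  have ht : |x - 1/2| ≤ 1/2 := by
    rw [abs_le]; constructor <;> linarith
  set t := |x - 1/2| with htdef
  have hrw : ∀ μ : ℝ, 0 < μ → Real.cosh (μ * (x - 1/2)) = Real.cosh (μ * t) := by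
    intro μ hμ
    rw [← Real.cosh_abs (μ * (x - 1/2)), abs_mul, abs_of_pos hμ]
  rw [hrw a ha, hrw b hb]
  have hca : 0 < Real.cosh (a/2) := Real.cosh_pos _
  have hcb : 0 < Real.cosh (b/2) := Real.cosh_pos _
  have key : ∀ X Y : ℝ, 2 * (Real.cosh X * Real.cosh Y)
      = Real.cosh (X+Y) + Real.cosh (X-Y) := by
    intro X Y; rw [Real.cosh_add, Real.cosh_sub]; ring
  have h1 : Real.cosh (b*t + a/2) ≤ Real.cosh (a*t + b/2) := by
    rw [Real.cosh_le_cosh]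
    have hn1 : 0 ≤ b*t + a/2 := by positivity
    have hn2 : 0 ≤ a*t + b/2 := by positivity
    rw [abs_of_nonneg hn1, abs_of_nonneg hn2]
    nlinarith
  have h2 : Real.cosh (b*t - a/2) ≤ Real.cosh (a*t - b/2) := by
    rw [Real.cosh_le_cosh]
    have hnp : a*t - b/2 ≤ 0 := by nlinarith
    rw [abs_of_nonpos hnp, abs_le]
    constructor <;> nlinarith
  have hmain : Real.cosh (b*t) * Real.cosh (a/2) ≤ Real.cosh (a*t) * Real.cosh (b/2) := by
    nlinarith [key (b*t) (a/2), key (a*t) (b/2)]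
  have : Real.cosh (b*t) / Real.cosh (b/2) ≤ Real.cosh (a*t) / Real.cosh (a/2) :=
    (div_le_div_iff₀ hcb hca).mpr hmain
  linarith
end
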